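/- Fix g ≥ 2 and let γ = 1/(4 log g). For all sufficiently large k, the sum over pairs (n, m) with 1 ≤ m ≤ n ≤ k and m ≤ k - γ log k of |P_n| · |P_m| is at most 16 · g^{k + 1 - (γ/2) log k}. -/

import Mathlib

/-!
An `n`-digit palindrome is determined by its top `⌈n/2⌉` digits, so `|P_n| ≤ g^⌈n/2⌉`, and
since these bounds grow geometrically, `∑_{n ≤ N} |P_n| ≤ 4 g^⌈N/2⌉`. Forgetting the condition
`m ≤ n`, the double sum factors into two such partial sums, with `N = k` and
`N = M = ⌊k - γ log k⌋`, and `⌈k/2⌉ + ⌈M/2⌉ ≤ k + 1 - (γ/2) log k`.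
-/

/-- The finite set of base-`g` palindromes with exactly `n` digits. -/
def palFinset (g n : ℕ) : Finset ℕ :=
  (Finset.range (g ^ n)).filter
    (fun m => (Nat.digits g m).length = n ∧ (Nat.digits g m).reverse = Nat.digits g m)

open Finset

theorem List.eq_of_drop_eq_of_reverse_eq {α : Type*} {l l' : List α} {k : ℕ}
    (hl : l.reverse = l) (hl' : l'.reverse = l') (hlen : l.length = l'.length)
    (hk : 2 * k ≤ l.length) (hdrop : l.drop k = l'.drop k) : l = l' := by
  have take_eq : ∀ m : List α, m.reverse = m → 2 * k ≤ m.length →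
      m.take k = ((m.drop k).drop (m.length - 2 * k)).reverse := by
    intro m hm hmk
    conv_lhs => rw [← hm]
    rw [List.take_reverse, List.drop_drop]
    congr 2
    omega
  rw [← List.take_append_drop k l, ← List.take_append_drop k l', take_eq l hl hk,
    take_eq l' hl' (hlen ▸ hk), hdrop, hlen]

theorem Nat.digits_div_pow {b : ℕ} (hb : 1 < b) (k n : ℕ) :
    b.digits (n / b ^ k) = (b.digits n).drop k := by
  induction k generalizing n with
  | zero => simp
  | succ k ih =>
    rcases Nat.eq_zero_or_pos n with rfl | hn
    · simp
    · rw [pow_succ', ← Nat.div_div_eq_div_mul, ih, Nat.digits_def' hb hn, List.drop_succ_cons]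

theorem card_palFinset_le {g : ℕ} (hg : 1 < g) (n : ℕ) :
    #(palFinset g n) ≤ g ^ ((n + 1) / 2) := by
  have top_half_lt : ∀ a ∈ palFinset g n, a / g ^ (n / 2) ∈ range (g ^ ((n + 1) / 2)) := by
    intro a ha
    simp only [palFinset, mem_filter, mem_range] at ha ⊢
    rw [Nat.div_lt_iff_lt_mul (by positivity), ← pow_add]
    exact ha.1.trans_le (Nat.pow_le_pow_right (by omega) (by omega))
  have top_half_inj : Set.InjOn (· / g ^ (n / 2)) (palFinset g n) := by
    intro a ha b hb hab
    obtain ⟨-, ha_len, ha_pal⟩ := mem_filter.1 ha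
    obtain ⟨-, hb_len, hb_pal⟩ := mem_filter.1 hb
    rw [← Nat.digits_inj_iff (b := g)]
    refine List.eq_of_drop_eq_of_reverse_eq (k := n / 2) ha_pal hb_pal
      (ha_len.trans hb_len.symm) (by omega) ?_
    rw [← Nat.digits_div_pow hg, ← Nat.digits_div_pow hg]
    exact congrArg g.digits hab
  simpa using card_le_card_of_injOn _ top_half_lt top_half_inj

theorem sum_Icc_pow_half_succ_le {g : ℕ} (hg : 2 ≤ g) :
    ∀ N : ℕ, ∑ n ∈ Icc 1 N, g ^ ((n + 1) / 2) ≤ 4 * g ^ ((N + 1) / 2)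
  | 0 => by simp
  | 1 => by simp only [Icc_self, sum_singleton]; omega
  | N + 2 => by
    have ih := sum_Icc_pow_half_succ_le hg N
    rw [sum_Icc_succ_top (by omega), sum_Icc_succ_top (by omega),
      show (N + 2 + 1) / 2 = (N + 1) / 2 + 1 by omega]
    have hprev : g ^ ((N + 1 + 1) / 2) ≤ g ^ ((N + 1) / 2 + 1) :=
      Nat.pow_le_pow_right (by omega) (by omega)
    rw [pow_succ] at hprev ⊢
    nlinarith [Nat.zero_le (g ^ ((N + 1) / 2))]

theorem sum_card_palFinset_le {g : ℕ} (hg : 2 ≤ g) (N : ℕ) :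
    ∑ n ∈ Icc 1 N, (#(palFinset g n) : ℝ) ≤ 4 * (g : ℝ) ^ ((N + 1) / 2) := by
  exact_mod_cast (sum_le_sum fun n _ => card_palFinset_le hg n).trans
    (sum_Icc_pow_half_succ_le hg N)

theorem sum_card_mul_card_le {g : ℕ} (hg : 2 ≤ g) (k M : ℕ) :
    ∑ nm ∈ Icc 1 k ×ˢ Icc 1 M, (#(palFinset g nm.1) : ℝ) * #(palFinset g nm.2) ≤
      16 * (g : ℝ) ^ ((k + 1) / 2 + (M + 1) / 2) := calc
  _ = (∑ n ∈ Icc 1 k, (#(palFinset g n) : ℝ)) * ∑ m ∈ Icc 1 M, (#(palFinset g m) : ℝ) := by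
      rw [sum_product, sum_mul_sum]
  _ ≤ (4 * (g : ℝ) ^ ((k + 1) / 2)) * (4 * (g : ℝ) ^ ((M + 1) / 2)) :=
      mul_le_mul (sum_card_palFinset_le hg k) (sum_card_palFinset_le hg M)
        (sum_nonneg fun _ _ => by positivity) (by positivity)
  _ = 16 * (g : ℝ) ^ ((k + 1) / 2 + (M + 1) / 2) := by ring

theorem natCast_half_succ_le (n : ℕ) : (((n + 1) / 2 : ℕ) : ℝ) ≤ ((n : ℝ) + 1) / 2 := by
  simpa using Nat.cast_div_le (α := ℝ) (m := n + 1) (n := 2)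

theorem stmt_11 (g : ℕ) (hg : 2 ≤ g) :
    let γ : ℝ := 1 / (4 * Real.log g)
    ∃ K : ℕ, ∀ k : ℕ, K ≤ k →
      ∑ nm ∈ (Finset.Icc 1 k ×ˢ Finset.Icc 1 k).filter
          (fun nm : ℕ × ℕ => nm.2 ≤ nm.1 ∧ (nm.2 : ℝ) ≤ k - γ * Real.log k),
          ((palFinset g nm.1).card : ℝ) * ((palFinset g nm.2).card : ℝ)
        ≤ 16 * (g : ℝ) ^ ((k : ℝ) + 1 - (γ / 2) * Real.log k) := by
  intro γ
  refine ⟨1, fun k hk => ?_⟩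
  have hγ : 0 ≤ γ ∧ γ ≤ 1 := by
    have hlog2 : (1 : ℝ) / 4 ≤ Real.log 2 := by linarith [Real.log_two_gt_d9]
    have hlogg : (1 : ℝ) / 4 ≤ Real.log g :=
      hlog2.trans (Real.log_le_log two_pos (by exact_mod_cast hg))
    exact ⟨by positivity, by rw [div_le_one (by positivity)]; linarith⟩
  set x : ℝ := k - γ * Real.log k
  have hx : 0 ≤ x := by
    have hk' : (1 : ℝ) ≤ k := by exact_mod_cast hk
    nlinarith [Real.log_nonneg hk', Real.log_le_sub_one_of_pos (zero_lt_one.trans_le hk')]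
  set M := ⌊x⌋₊
  calc _ ≤ ∑ nm ∈ Icc 1 k ×ˢ Icc 1 M, (#(palFinset g nm.1) : ℝ) * #(palFinset g nm.2) := by
        refine sum_le_sum_of_subset_of_nonneg (fun nm hnm => ?_) (fun _ _ _ => by positivity)
        simp only [mem_filter, mem_product, mem_Icc] at hnm ⊢
        exact ⟨hnm.1.1, hnm.1.2.1, Nat.le_floor hnm.2.2⟩
    _ ≤ 16 * (g : ℝ) ^ ((((k + 1) / 2 + (M + 1) / 2 : ℕ)) : ℝ) := by
        rw [Real.rpow_natCast]
        exact sum_card_mul_card_le hg k M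
    _ ≤ 16 * (g : ℝ) ^ ((k : ℝ) + 1 - (γ / 2) * Real.log k) := by
        gcongr
        · exact_mod_cast (by omega : 1 ≤ g)
        · have hk_half := natCast_half_succ_le k
          have hM_half := natCast_half_succ_le M
          have hM : (M : ℝ) ≤ x := Nat.floor_le hx
          push_cast
          linarith
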